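/- For every δ > 0 and β > 0, the integral ∫_{ℝ²} ∫_{ℝ²} (1 + |ln ‖x−y‖|)² e^{−2δ‖x−y‖} e^{−2β⟨y₁⟩} e^{−2β⟨y₂⟩} dx dy is finite, where ⟨t⟩ = (1 + t²)^{1/2} and y = (y₁, y₂). -/

import Mathlib

/-!
Substituting `x ↦ x + y`, Tonelli factorizes the double integral into `∫ K · ∫ w` with
`K z = (1 + |ln ‖z‖|)² e^{-2δ‖z‖}` and `w y = e^{-2β⟨y₁⟩} e^{-2β⟨y₂⟩}`; the weight is dominated by
`e^{-2β|y₁|} e^{-2β|y₂|}`. For the kernel, `(1 + |ln r|) e^{-δr} ≤ C r^{-1/4} e^{-δr/2}`, and since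
`‖z‖ ≥ |z₁|, |z₂|` while `k t = t^{-1/4} e^{-δt/2}` decreases, `K z ≤ C² k |z₁| · k |z₂|`: the
logarithmic singularity at the origin is split between the two coordinates, where it is integrable.
-/

open MeasureTheory Real

noncomputable section

/-- The Euclidean norm on `ℝ²` realized as `ℝ × ℝ`. -/
def eNorm2 (x : ℝ × ℝ) : ℝ := Real.sqrt (x.1 ^ 2 + x.2 ^ 2)

open Set
open scoped ENNReal

theorem lintegral_prod_sub_mul {G : Type*} [MeasurableSpace G] [AddGroup G] [MeasurableAdd G]
    [MeasurableSub₂ G] (μ : Measure G) [SFinite μ] [μ.IsAddRightInvariant] {f g : G → ℝ≥0∞}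
    (hf : Measurable f) (hg : Measurable g) :
    ∫⁻ q, f (q.1 - q.2) * g q.2 ∂μ.prod μ = (∫⁻ x, f x ∂μ) * ∫⁻ y, g y ∂μ := by
  have hmeas : Measurable fun q : G × G => f (q.1 - q.2) * g q.2 :=
    (hf.comp (measurable_fst.sub measurable_snd)).mul (hg.comp measurable_snd)
  rw [lintegral_prod_symm' _ hmeas, ← lintegral_const_mul _ hg]
  exact lintegral_congr fun y => (lintegral_mul_const _ (hf.comp (measurable_sub_const y))).trans
    (congrArg (· * g y) (lintegral_sub_right_eq_self f y))

theorem integrable_abs_rpow_mul_exp_neg_mul_abs {s c : ℝ} (hs : -1 < s) (hc : 0 < c) :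
    Integrable fun t : ℝ => |t| ^ s * exp (-c * |t|) := by
  have hIoi : IntegrableOn (fun t : ℝ => |t| ^ s * exp (-c * |t|)) (Ioi 0) :=
    (integrableOn_rpow_mul_exp_neg_mul_rpow hs one_pos hc).congr_fun
      (fun t ht => by simp only [rpow_one, abs_of_pos (mem_Ioi.mp ht)]) measurableSet_Ioi
  rw [← integrableOn_univ, ← Iio_union_Ici (a := (0 : ℝ)), integrableOn_union,
    integrableOn_Ici_iff_integrableOn_Ioi,
    ← (Measure.measurePreserving_neg volume).integrableOn_comp_preimage
      (Homeomorph.neg ℝ).measurableEmbedding]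
  simpa only [Function.comp_def, abs_neg, neg_preimage, neg_Iio, neg_zero, and_self] using hIoi

theorem integrable_exp_neg_mul_sqrt_one_add_sq {c : ℝ} (hc : 0 < c) :
    Integrable fun t : ℝ => exp (-c * √(1 + t ^ 2)) := by
  refine (integrable_abs_rpow_mul_exp_neg_mul_abs (s := 0) (by norm_num) hc).mono'
    (by fun_prop) (.of_forall fun t => ?_)
  have hsqrt : |t| ≤ √(1 + t ^ 2) := by
    rw [← sqrt_sq_eq_abs]; exact sqrt_le_sqrt (by linarith)
  rw [norm_of_nonneg (exp_pos _).le, rpow_zero, one_mul]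
  exact exp_le_exp.mpr (by nlinarith)

theorem mul_exp_neg_mul_le_inv {c : ℝ} (hc : 0 < c) (r : ℝ) : r * exp (-c * r) ≤ c⁻¹ := by
  have h := (mul_exp_neg_le_exp_neg_one (c * r)).trans (exp_le_one_iff.mpr (by norm_num))
  rw [← one_div, le_div_iff₀' hc]
  simpa only [neg_mul, mul_assoc] using h

section LogBounds

variable {r : ℝ}

theorem one_add_abs_log_le_of_le_one (hr0 : 0 < r) (hr1 : r ≤ 1) :
    1 + |log r| ≤ 5 * r ^ (-1/4 : ℝ) := by
  have hlog : |log r| ≤ 4 * r ^ (-1/4 : ℝ) := by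
    have h := log_le_rpow_div (inv_nonneg.mpr hr0.le) (show (0 : ℝ) < 1/4 by norm_num)
    rw [log_inv, inv_rpow hr0.le, ← rpow_neg hr0.le] at h
    rw [abs_of_nonpos (log_nonpos hr0.le hr1)]
    convert h using 1
    ring_nf
  have hone : 1 ≤ r ^ (-1/4 : ℝ) := one_le_rpow_of_pos_of_le_one_of_nonpos hr0 hr1 (by norm_num)
  linarith

theorem one_add_abs_log_le_of_one_le (hr : 1 ≤ r) : 1 + |log r| ≤ 5 * r ^ (1/4 : ℝ) := by
  have h := log_le_rpow_div (zero_le_one.trans hr) (show (0 : ℝ) < 1/4 by norm_num)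
  have hone : 1 ≤ r ^ (1/4 : ℝ) := one_le_rpow hr (by norm_num)
  rw [abs_of_nonneg (log_nonneg hr)]
  linarith

theorem one_add_abs_log_mul_exp_le {δ : ℝ} (hδ : 0 < δ) (hr : 0 < r) :
    (1 + |log r|) * exp (-δ * r) ≤ (5 + 10 / δ) * (r ^ (-1/4 : ℝ) * exp (-(δ / 2) * r)) := by
  have hexp : exp (-δ * r) = exp (-(δ / 2) * r) * exp (-(δ / 2) * r) := by
    rw [← exp_add]; ring_nf
  rcases le_total r 1 with hr1 | hr1
  · calc (1 + |log r|) * exp (-δ * r)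
        ≤ 5 * r ^ (-1/4 : ℝ) * exp (-(δ / 2) * r) :=
          mul_le_mul (one_add_abs_log_le_of_le_one hr hr1) (exp_le_exp.mpr (by nlinarith))
            (exp_pos _).le (by positivity)
      _ ≤ (5 + 10 / δ) * (r ^ (-1/4 : ℝ) * exp (-(δ / 2) * r)) := by
          rw [mul_assoc]; gcongr; exact le_add_of_nonneg_right (by positivity)
  · have hsplit : r ^ (1/4 : ℝ) = r ^ (-1/4 : ℝ) * r ^ (1/2 : ℝ) := by
      rw [← rpow_add hr]; norm_num
    have hsqrt : r ^ (1/2 : ℝ) ≤ r := by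
      simpa using rpow_le_rpow_of_exponent_le hr1 (show (1/2 : ℝ) ≤ 1 by norm_num)
    have hdecay : r ^ (1/2 : ℝ) * exp (-(δ / 2) * r) ≤ 2 / δ := by
      calc r ^ (1/2 : ℝ) * exp (-(δ / 2) * r) ≤ r * exp (-(δ / 2) * r) := by gcongr
        _ ≤ 2 / δ := by simpa using mul_exp_neg_mul_le_inv (half_pos hδ) r
    calc (1 + |log r|) * exp (-δ * r) ≤ 5 * r ^ (1/4 : ℝ) * exp (-δ * r) := by
          gcongr; exact one_add_abs_log_le_of_one_le hr1
      _ = 5 * r ^ (-1/4 : ℝ) * (r ^ (1/2 : ℝ) * exp (-(δ / 2) * r)) * exp (-(δ / 2) * r) := by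
          rw [hsplit, hexp]; ring
      _ ≤ 5 * r ^ (-1/4 : ℝ) * (2 / δ) * exp (-(δ / 2) * r) := by gcongr
      _ = 10 / δ * (r ^ (-1/4 : ℝ) * exp (-(δ / 2) * r)) := by ring
      _ ≤ (5 + 10 / δ) * (r ^ (-1/4 : ℝ) * exp (-(δ / 2) * r)) := by gcongr; norm_num

end LogBounds

theorem abs_fst_le_eNorm2 (z : ℝ × ℝ) : |z.1| ≤ eNorm2 z := by
  rw [← sqrt_sq_eq_abs]; exact sqrt_le_sqrt (by nlinarith [sq_nonneg z.2])

theorem abs_snd_le_eNorm2 (z : ℝ × ℝ) : |z.2| ≤ eNorm2 z := by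
  rw [← sqrt_sq_eq_abs]; exact sqrt_le_sqrt (by nlinarith [sq_nonneg z.1])

@[fun_prop]
theorem measurable_eNorm2 : Measurable eNorm2 := by
  unfold eNorm2; fun_prop

theorem rpow_mul_exp_neg_mul_le_of_le {s c a b : ℝ} (hs : s ≤ 0) (hc : 0 ≤ c) (ha : 0 < a)
    (hab : a ≤ b) : b ^ s * exp (-c * b) ≤ a ^ s * exp (-c * a) :=
  mul_le_mul (rpow_le_rpow_of_nonpos ha hab hs) (exp_le_exp.mpr (by nlinarith))
    (exp_pos _).le (rpow_nonneg ha.le _)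

theorem one_add_abs_log_eNorm2_sq_mul_exp_le {δ : ℝ} (hδ : 0 < δ) {z : ℝ × ℝ}
    (h₁ : z.1 ≠ 0) (h₂ : z.2 ≠ 0) :
    (1 + |log (eNorm2 z)|) ^ 2 * exp (-2 * δ * eNorm2 z) ≤
      (5 + 10 / δ) ^ 2 * ((|z.1| ^ (-1/4 : ℝ) * exp (-(δ / 2) * |z.1|)) *
        (|z.2| ^ (-1/4 : ℝ) * exp (-(δ / 2) * |z.2|))) := by
  set r := eNorm2 z
  have hr : 0 < r := (abs_pos.mpr h₁).trans_le (abs_fst_le_eNorm2 z)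
  have hk₁ := rpow_mul_exp_neg_mul_le_of_le (s := -1/4) (by norm_num) (half_pos hδ).le
    (abs_pos.mpr h₁) (abs_fst_le_eNorm2 z)
  have hk₂ := rpow_mul_exp_neg_mul_le_of_le (s := -1/4) (by norm_num) (half_pos hδ).le
    (abs_pos.mpr h₂) (abs_snd_le_eNorm2 z)
  calc (1 + |log r|) ^ 2 * exp (-2 * δ * r) = ((1 + |log r|) * exp (-δ * r)) ^ 2 := by
        rw [mul_pow, ← exp_nat_mul]; ring_nf
    _ ≤ ((5 + 10 / δ) * (r ^ (-1/4 : ℝ) * exp (-(δ / 2) * r))) ^ 2 :=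
        pow_le_pow_left₀ (by positivity) (one_add_abs_log_mul_exp_le hδ hr) 2
    _ = (5 + 10 / δ) ^ 2 * ((r ^ (-1/4 : ℝ) * exp (-(δ / 2) * r)) *
          (r ^ (-1/4 : ℝ) * exp (-(δ / 2) * r))) := by ring
    _ ≤ _ := by
        gcongr (5 + 10 / δ) ^ 2 * ?_
        exact mul_le_mul hk₁ hk₂ (by positivity) (by positivity)

theorem integrable_one_add_abs_log_eNorm2_sq_mul_exp {δ : ℝ} (hδ : 0 < δ) :
    Integrable fun z : ℝ × ℝ => (1 + |log (eNorm2 z)|) ^ 2 * exp (-2 * δ * eNorm2 z) := by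
  have hk := integrable_abs_rpow_mul_exp_neg_mul_abs (s := -1/4) (by norm_num) (half_pos hδ)
  rw [Measure.volume_eq_prod]
  refine ((hk.mul_prod hk).const_mul ((5 + 10 / δ) ^ 2)).mono' ?_ ?_
  · fun_prop
  · -- off the coordinate axes, where `0 ^ (-1/4 : ℝ) = 0` breaks the bound
    filter_upwards [Measure.quasiMeasurePreserving_fst.ae (Measure.ae_ne volume 0),
      Measure.quasiMeasurePreserving_snd.ae (Measure.ae_ne volume 0)] with z h₁ h₂
    rw [norm_of_nonneg (by positivity)]
    exact one_add_abs_log_eNorm2_sq_mul_exp_le hδ h₁ h₂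

theorem integrable_exp_neg_mul_sqrt_one_add_sq_prod {c : ℝ} (hc : 0 < c) :
    Integrable fun y : ℝ × ℝ => exp (-c * √(1 + y.1 ^ 2)) * exp (-c * √(1 + y.2 ^ 2)) := by
  have h := integrable_exp_neg_mul_sqrt_one_add_sq hc
  rw [Measure.volume_eq_prod]
  exact h.mul_prod h

theorem hilbert_schmidt_kernel_integrable (δ β : ℝ) (hδ : 0 < δ) (hβ : 0 < β) :
    ∫⁻ q : (ℝ × ℝ) × (ℝ × ℝ),
      ENNReal.ofReal ((1 + |Real.log (eNorm2 (q.1 - q.2))|) ^ 2 *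
        Real.exp (-2 * δ * eNorm2 (q.1 - q.2)) *
        Real.exp (-2 * β * Real.sqrt (1 + q.2.1 ^ 2)) *
        Real.exp (-2 * β * Real.sqrt (1 + q.2.2 ^ 2))) < ⊤ := by
  let F : ℝ × ℝ → ℝ := fun z => (1 + |log (eNorm2 z)|) ^ 2 * exp (-2 * δ * eNorm2 z)
  let G : ℝ × ℝ → ℝ := fun y => exp (-(2 * β) * √(1 + y.1 ^ 2)) * exp (-(2 * β) * √(1 + y.2 ^ 2))
  have hF : Integrable F := integrable_one_add_abs_log_eNorm2_sq_mul_exp hδ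
  have hG : Integrable G := integrable_exp_neg_mul_sqrt_one_add_sq_prod (mul_pos two_pos hβ)
  have hFm : Measurable fun z => ENNReal.ofReal (F z) := by fun_prop
  have hGm : Measurable fun y => ENNReal.ofReal (G y) := by fun_prop
  calc _ = ∫⁻ q, ENNReal.ofReal (F (q.1 - q.2)) * ENNReal.ofReal (G q.2) ∂volume.prod volume := by
        rw [Measure.volume_eq_prod]
        refine lintegral_congr fun q => ?_
        rw [← ENNReal.ofReal_mul (by positivity)]
        congr 1
        simp only [F, G]
        ring_nf
    _ = (∫⁻ z, ENNReal.ofReal (F z)) * ∫⁻ y, ENNReal.ofReal (G y) :=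
        lintegral_prod_sub_mul volume hFm hGm
    _ < ⊤ := ENNReal.mul_lt_top hF.lintegral_lt_top hG.lintegral_lt_top

end
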